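/- Let ε be a real number with 0 < ε ≤ 1/2, let δ ∈ (0, 1), let r ≥ 1 be a natural number, and let q be a natural number with q ≥ (4/ε²) · (r + ln(1/δ)). Let Y_1, …, Y_q be i.i.d. Bernoulli(1/2 − ε) random variables. Then Pr[ Σ_{i=1}^q Y_i ≥ q/2 ] ≤ (1/100) · δ / 4^r. -/

import Mathlib

/-! Hoeffding's inequality for the centred `[0, 1]`-valued variables `Yᵢ - (1/2 - ε)` bounds the
probability of the deviation `qε` by `exp (-2qε²)`. The hypothesis on `q` makes this at most
`exp (-8r) · δ⁸ ≤ δ / (100 · 4ʳ)`, using `100 · 4ʳ ≤ 400ʳ ≤ e^{8r}`. -/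

open MeasureTheory ProbabilityTheory Real Finset
open scoped ENNReal

section

variable {Ω ι : Type*} [MeasurableSpace Ω] {μ : Measure Ω}

theorem measureReal_sum_sub_integral_ge_le_of_mem_Icc [IsProbabilityMeasure μ] {X : ι → Ω → ℝ}
    (hind : iIndepFun X μ) (hmeas : ∀ i, Measurable (X i)) {a b : ℝ} (hab : ∀ i, ∀ᵐ ω ∂μ, X i ω ∈ Set.Icc a b)
    (s : Finset ι) {t : ℝ} (ht : 0 ≤ t) :
    μ.real {ω | t ≤ ∑ i ∈ s, (X i ω - μ[X i])} ≤ exp (-2 * t ^ 2 / (#s * (b - a) ^ 2)) := by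
  have hcentered : iIndepFun (fun i ω ↦ X i ω - μ[X i]) μ := by
    exact hind.comp (fun i x ↦ x - μ[X i]) fun i ↦ measurable_id.sub_const μ[X i]
  convert HasSubgaussianMGF.measure_sum_ge_le_of_iIndepFun hcentered
    (fun i _ ↦ hasSubgaussianMGF_of_mem_Icc (hmeas i).aemeasurable (hab i)) ht using 2
  simp only [sum_const, nsmul_eq_mul, NNReal.coe_mul, NNReal.coe_natCast, NNReal.coe_pow,
    NNReal.coe_div, coe_nnnorm, Real.norm_eq_abs, NNReal.coe_ofNat, div_pow, sq_abs]
  rw [show (2 : ℝ) * (#s * ((b - a) ^ 2 / 2 ^ 2)) = #s * (b - a) ^ 2 / 2 by ring,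
    div_div_eq_mul_div]
  ring

theorem integral_eq_measureReal_of_eq_zero_or_eq_one {Y : Ω → ℝ} (hY : Measurable Y)
    (h01 : ∀ ω, Y ω = 0 ∨ Y ω = 1) : μ[Y] = μ.real {ω | Y ω = 1} := by
  have : Y = Set.indicator {ω | Y ω = 1} 1 := by
    ext ω
    rcases h01 ω with h | h <;> simp [h]
  conv_lhs => rw [this]
  exact integral_indicator_one (hY (measurableSet_singleton 1))

end

theorem hundred_mul_four_pow_le_exp {r : ℕ} (hr : 1 ≤ r) : 100 * 4 ^ r ≤ exp (8 * r) := by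
  have h400 : (400 : ℝ) ≤ exp 8 := by
    have := quadratic_le_exp_of_nonneg (x := 2) zero_le_two
    calc (400 : ℝ) ≤ (1 + 2 + 2 ^ 2 / 2) ^ 4 := by norm_num
      _ ≤ exp 2 ^ 4 := by gcongr
      _ = exp 8 := by rw [← exp_nat_mul]; norm_num
  calc (100 : ℝ) * 4 ^ r ≤ 100 ^ r * 4 ^ r := by
        gcongr; exact le_self_pow₀ (by norm_num) (by omega)
    _ = 400 ^ r := by rw [← mul_pow]; norm_num
    _ ≤ exp 8 ^ r := by gcongr
    _ = exp (8 * r) := by rw [← exp_nat_mul]; ring_nf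

theorem exp_neg_two_mul_sq_le {ε δ : ℝ} (hε : 0 < ε) (hδ0 : 0 < δ) (hδ1 : δ ≤ 1) {r q : ℕ}
    (hr : 1 ≤ r) (hq : 4 / ε ^ 2 * (r + log (1 / δ)) ≤ q) :
    exp (-2 * q * ε ^ 2) ≤ 1 / 100 * δ / 4 ^ r := by
  have hq' : 8 * (r + log (1 / δ)) ≤ 2 * q * ε ^ 2 := by
    rw [div_mul_eq_mul_div, div_le_iff₀ (by positivity)] at hq
    linarith
  calc exp (-2 * q * ε ^ 2) ≤ exp (-(8 * r) + 8 * log δ) := by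
        rw [one_div, log_inv] at hq'
        gcongr
        linarith
    _ = δ ^ 8 / exp (8 * r) := by
        rw [exp_add, exp_neg, ← Nat.cast_ofNat, ← log_pow, exp_log (by positivity)]
        ring
    _ ≤ δ / (100 * 4 ^ r) := by
        gcongr
        · exact pow_le_of_le_one hδ0.le hδ1 (by norm_num)
        · exact hundred_mul_four_pow_le_exp hr
    _ = 1 / 100 * δ / 4 ^ r := by ring

/-- **Statement 4.** For `0 < ε ≤ 1/2`, `δ ∈ (0,1)`, `r ≥ 1`,
`q ≥ (4/ε²)·(r + ln(1/δ))`, and i.i.d. `Bernoulli(1/2 - ε)` random variables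
`Y_1, …, Y_q`, the probability that their sum is at least `q/2` is at most
`(1/100)·δ/4^r`. -/
theorem elimination_round_nonmis_vertex_survives
    (Ω : Type*) [MeasurableSpace Ω] (μ : Measure Ω) [IsProbabilityMeasure μ]
    (ε : ℝ) (hε0 : 0 < ε) (hε : ε ≤ 1 / 2)
    (δ : ℝ) (hδ0 : 0 < δ) (hδ1 : δ < 1)
    (r : ℕ) (hr : 1 ≤ r)
    (q : ℕ) (hq : (4 / ε ^ 2) * (r + Real.log (1 / δ)) ≤ (q : ℝ))
    (Y : Fin q → Ω → ℝ)
    (hmeas : ∀ i, Measurable (Y i))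
    (h01 : ∀ i ω, Y i ω = 0 ∨ Y i ω = 1)
    (hBer : ∀ i, μ {ω | Y i ω = 1} = ENNReal.ofReal (1 / 2 - ε))
    (hind : iIndepFun Y μ) :
    μ {ω | (q : ℝ) / 2 ≤ ∑ i, Y i ω}
      ≤ ENNReal.ofReal ((1 / 100) * δ / 4 ^ r) := by
  have hmean (i : Fin q) : μ[Y i] = 1 / 2 - ε := by
    rw [integral_eq_measureReal_of_eq_zero_or_eq_one (hmeas i) (h01 i), measureReal_def, hBer i,
      ENNReal.toReal_ofReal (by linarith)]
  have hq0 : (0 : ℝ) < q := by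
    have hlog : 0 ≤ log (1 / δ) := log_nonneg (by rw [le_div_iff₀ hδ0]; linarith)
    have hr0 : (0 : ℝ) < r := by exact_mod_cast hr
    exact lt_of_lt_of_le (by positivity) hq
  have hevent : {ω | (q : ℝ) / 2 ≤ ∑ i, Y i ω} = {ω | q * ε ≤ ∑ i, (Y i ω - μ[Y i])} := by
    ext ω
    simp only [Set.mem_ofPred_eq, sum_sub_distrib, hmean, sum_const, card_univ, Fintype.card_fin,
      nsmul_eq_mul]
    constructor <;> intro h <;> linarith
  have hbounded (i : Fin q) : ∀ᵐ ω ∂μ, Y i ω ∈ Set.Icc (0 : ℝ) 1 :=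
    ae_of_all _ fun ω ↦ by rcases h01 i ω with h | h <;> simp [h]
  rw [← ofReal_measureReal, hevent]
  refine ENNReal.ofReal_le_ofReal ?_
  calc μ.real {ω | q * ε ≤ ∑ i, (Y i ω - μ[Y i])}
      ≤ exp (-2 * (q * ε) ^ 2 / (#univ * (1 - 0) ^ 2)) :=
        measureReal_sum_sub_integral_ge_le_of_mem_Icc hind hmeas hbounded _ (by positivity)
    _ = exp (-2 * q * ε ^ 2) := by
        rw [card_univ, Fintype.card_fin, sub_zero, one_pow, mul_one]
        field_simp [hq0.ne']
    _ ≤ 1 / 100 * δ / 4 ^ r := exp_neg_two_mul_sq_le hε0 hδ0 hδ1.le hr hq
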